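/- Let Ω ⊂ ℝ² be a bounded domain and let σ ∈ L^∞(Ω) with ess inf σ > 0. Define the forward map F(τ) := u^τ ∈ H¹₀(Ω) ⊂ L²(Ω) (weak solution of ∇·(τ∇u)=1 with homogeneous Dirichlet boundary conditions) and, for κ ∈ L^∞(Ω), define F'(σ)κ := v_κ^σ, the solution of the linearized problem ∫_Ω σ ∇v_κ^σ·∇w dx = -∫_Ω κ ∇u^σ·∇w dx for all w ∈ H¹₀(Ω). Then F is differentiable at σ with respect to the L^∞-norm in the following sense: ‖F(σ+κ) − F(σ) − F'(σ)κ‖_{L²(Ω)} / ‖κ‖_{L^∞(Ω)} → 0 as ‖κ‖_{L^∞(Ω)} → 0, where the limit is taken over κ ∈ L^∞(Ω) with ess inf(σ+κ) > 0 (equivalently, over κ satisfying ess inf(σ+κ) ≥ (ess inf σ)/2, which holds for all sufficiently small ‖κ‖_{L^∞(Ω)}). -/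

import Mathlib

open MeasureTheory Filter
open scoped RealInnerProductSpace

noncomputable section

/-- Abbreviation for the plane `ℝ²`. -/
abbrev E2 : Type := EuclideanSpace ℝ (Fin 2)

/-- Membership in `H¹₀(Ω)`: the pair `(u, gu)` — a function together with its (weak)
gradient — lies in `L²(Ω)` and is an `H¹(Ω)`-limit of a sequence of smooth functions
compactly supported in `Ω` (i.e. `u` lies in the closure of `C_c^∞(Ω)` in `H¹(Ω)`). -/
def MemH10 (Ω : Set E2) (u : E2 → ℝ) (gu : E2 → E2) : Prop :=
  MemLp u 2 (volume.restrict Ω) ∧ MemLp gu 2 (volume.restrict Ω) ∧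
  ∃ φ : ℕ → E2 → ℝ,
    (∀ n, ContDiff ℝ (⊤ : ℕ∞) (φ n) ∧ HasCompactSupport (φ n) ∧ tsupport (φ n) ⊆ Ω) ∧
    Tendsto (fun n => ∫ x in Ω, (φ n x - u x) ^ 2) atTop (nhds 0) ∧
    Tendsto (fun n => ∫ x in Ω, ‖gradient (φ n) x - gu x‖ ^ 2) atTop (nhds 0)

/-!
Write `U = u^{σ+κ}`, `r = U - u^σ` and `e = r - v`. Subtracting the weak formulations, `r` and
`e` solve the `σ`-problem with loads `w ↦ -∫ κ ∇U·∇w` and `w ↦ -∫ κ ∇r·∇w`. Testing each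
problem with its own solution, coercivity (`σ ≥ c := ess inf σ`, and `σ + κ ≥ c/2` once
`T := ‖κ‖_∞ ≤ c/2`) and Cauchy–Schwarz give `‖∇U‖ ≤ 2A/c`, `‖∇r‖ ≤ (T/c) ‖∇U‖` and
`‖∇e‖ ≤ (T/c) ‖∇r‖`, where `A` bounds the load `w ↦ ∫ w` on `H¹₀(Ω)`. The Poincaré inequality
then gives `‖e‖_{L²} = O(T²)`.

Poincaré on `H¹₀(Ω)` follows, by density, from the planar Gagliardo–Nirenberg–Sobolev
inequality `‖φ‖_{L²} ≲ ‖Dφ‖_{L¹}` combined with Hölder's inequality on the bounded set `Ω`.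
-/

open scoped ENNReal NNReal Topology

section L2

variable {α : Type*} [MeasurableSpace α] {ν : Measure α} {G : Type*} [NormedAddCommGroup G]

theorem MeasureTheory.MemLp.eLpNorm_two_eq {f : α → G} (hf : MemLp f 2 ν) :
    eLpNorm f 2 ν = ENNReal.ofReal (√(∫ x, ‖f x‖ ^ 2 ∂ν)) := by
  rw [hf.eLpNorm_eq_integral_rpow_norm two_ne_zero ENNReal.ofNat_ne_top, Real.sqrt_eq_rpow]
  norm_num

theorem integral_norm_sq_eq_eLpNorm_sq {f : α → G} (hf : MemLp f 2 ν) :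
    ∫ x, ‖f x‖ ^ 2 ∂ν = (eLpNorm f 2 ν).toReal ^ 2 := by
  rw [hf.eLpNorm_two_eq, ENNReal.toReal_ofReal (Real.sqrt_nonneg _),
    Real.sq_sqrt (integral_nonneg fun _ => by positivity)]

theorem tendsto_eLpNorm_of_tendsto_integral_norm_sq {ι : Type*} {l : Filter ι} {f : ι → α → G}
    (hf : ∀ n, MemLp (f n) 2 ν) (h : Tendsto (fun n => ∫ x, ‖f n x‖ ^ 2 ∂ν) l (𝓝 0)) :
    Tendsto (fun n => eLpNorm (f n) 2 ν) l (𝓝 0) := by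
  simp_rw [fun n => (hf n).eLpNorm_two_eq]
  exact ((ENNReal.continuous_ofReal.comp Real.continuous_sqrt).tendsto' 0 0 (by simp)).comp h

theorem tendsto_integral_norm_sub_sq {ι : Type*} {l : Filter ι} {f g : ι → α → G}
    (hf : ∀ n, MemLp (f n) 2 ν) (hg : ∀ n, MemLp (g n) 2 ν)
    (hf0 : Tendsto (fun n => ∫ x, ‖f n x‖ ^ 2 ∂ν) l (𝓝 0))
    (hg0 : Tendsto (fun n => ∫ x, ‖g n x‖ ^ 2 ∂ν) l (𝓝 0)) :
    Tendsto (fun n => ∫ x, ‖f n x - g n x‖ ^ 2 ∂ν) l (𝓝 0) := by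
  have hsq {h : α → G} (hh : MemLp h 2 ν) : Integrable (fun x => ‖h x‖ ^ 2) ν :=
    (memLp_two_iff_integrable_sq_norm hh.1).1 hh
  refine squeeze_zero (fun n => integral_nonneg fun _ => by positivity) (fun n => ?_)
    (by simpa using (hf0.const_mul 2).add (hg0.const_mul 2))
  rw [← integral_const_mul, ← integral_const_mul, ← integral_add ((hsq (hf n)).const_mul 2)
    ((hsq (hg n)).const_mul 2)]
  refine integral_mono (hsq ((hf n).sub (hg n))) (((hsq (hf n)).const_mul 2).add
    ((hsq (hg n)).const_mul 2)) fun x => ?_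
  have := norm_sub_le (f n x) (g n x)
  have := norm_nonneg (f n x - g n x)
  nlinarith [sq_nonneg (‖f n x‖ - ‖g n x‖)]

theorem integral_norm_mul_norm_le {f g : α → G} (hf : MemLp f 2 ν) (hg : MemLp g 2 ν) :
    ∫ x, ‖f x‖ * ‖g x‖ ∂ν ≤ (eLpNorm f 2 ν).toReal * (eLpNorm g 2 ν).toReal := by
  have := integral_mul_norm_le_Lp_mul_Lq (μ := ν) Real.HolderConjugate.two_two
    (by simpa using hf) (by simpa using hg)
  simp only [Real.rpow_two] at this
  rwa [integral_norm_sq_eq_eLpNorm_sq hf, integral_norm_sq_eq_eLpNorm_sq hg,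
    ← Real.sqrt_eq_rpow, ← Real.sqrt_eq_rpow, Real.sqrt_sq ENNReal.toReal_nonneg,
    Real.sqrt_sq ENNReal.toReal_nonneg] at this

theorem abs_integral_le_mul_eLpNorm [IsFiniteMeasure ν] {f : α → ℝ} (hf : MemLp f 2 ν) :
    |∫ x, f x ∂ν| ≤ (eLpNorm (fun _ => (1 : ℝ)) 2 ν).toReal * (eLpNorm f 2 ν).toReal :=
  calc |∫ x, f x ∂ν| ≤ ∫ x, ‖(1 : ℝ)‖ * ‖f x‖ ∂ν := by
        simpa using abs_integral_le_integral_abs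
    _ ≤ _ := integral_norm_mul_norm_le (memLp_const 1) hf

theorem sqrt_integral_sq_eq_eLpNorm {f : α → ℝ} (hf : MemLp f 2 ν) :
    √(∫ x, f x ^ 2 ∂ν) = (eLpNorm f 2 ν).toReal := by
  rw [hf.eLpNorm_two_eq, ENNReal.toReal_ofReal (Real.sqrt_nonneg _)]
  simp only [Real.norm_eq_abs, sq_abs]

theorem MeasureTheory.MemLp.ae_abs_le_eLpNorm_top {f : α → ℝ} (hf : MemLp f ∞ ν) :
    ∀ᵐ x ∂ν, |f x| ≤ (eLpNorm f ∞ ν).toReal := by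
  filter_upwards [ae_le_eLpNormEssSup (f := f) (μ := ν)] with x hx
  rw [← Real.norm_eq_abs, ← toReal_enorm]
  exact ENNReal.toReal_mono hf.2.ne (by rwa [eLpNorm_exponent_top])

theorem MeasureTheory.MemLp.ae_abs_le_essSup_abs {f : α → ℝ} (hf : MemLp f ∞ ν) :
    ∀ᵐ x ∂ν, |f x| ≤ essSup (fun x => |f x|) ν :=
  ae_le_essSup ⟨_, eventually_map.2 hf.ae_abs_le_eLpNorm_top⟩

theorem MeasureTheory.MemLp.ae_essInf_le {f : α → ℝ} (hf : MemLp f ∞ ν) :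
    ∀ᵐ x ∂ν, essInf f ν ≤ f x :=
  _root_.ae_essInf_le
    ⟨_, eventually_map.2 (hf.ae_abs_le_eLpNorm_top.mono fun _ hx => neg_le_of_abs_le hx)⟩

variable [InnerProductSpace ℝ G]

theorem MeasureTheory.MemLp.integrable_inner {f g : α → G} (hf : MemLp f 2 ν)
    (hg : MemLp g 2 ν) : Integrable (fun x => ⟪f x, g x⟫) ν :=
  (L2.integrable_inner (𝕜 := ℝ) (hf.toLp f) (hg.toLp g)).congr <| by
    filter_upwards [hf.coeFn_toLp, hg.coeFn_toLp] with x hfx hgx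
    rw [hfx, hgx]

theorem integrable_mul_inner {τ : α → ℝ} {f g : α → G} (hτ : MemLp τ ∞ ν) (hf : MemLp f 2 ν)
    (hg : MemLp g 2 ν) : Integrable (fun x => τ x * ⟪f x, g x⟫) ν :=
  (hf.integrable_inner hg).mul_of_top_right hτ

theorem integral_mul_inner_sub_left {τ : α → ℝ} {f₁ f₂ g : α → G} (hτ : MemLp τ ∞ ν)
    (hf₁ : MemLp f₁ 2 ν) (hf₂ : MemLp f₂ 2 ν) (hg : MemLp g 2 ν) :
    ∫ x, τ x * ⟪f₁ x - f₂ x, g x⟫ ∂ν =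
      ∫ x, τ x * ⟪f₁ x, g x⟫ ∂ν - ∫ x, τ x * ⟪f₂ x, g x⟫ ∂ν := by
  simp only [inner_sub_left, mul_sub]
  exact integral_sub (integrable_mul_inner hτ hf₁ hg) (integrable_mul_inner hτ hf₂ hg)

theorem integral_add_mul_inner {σ κ : α → ℝ} {f g : α → G} (hσ : MemLp σ ∞ ν)
    (hκ : MemLp κ ∞ ν) (hf : MemLp f 2 ν) (hg : MemLp g 2 ν) :
    ∫ x, (σ x + κ x) * ⟪f x, g x⟫ ∂ν =
      ∫ x, σ x * ⟪f x, g x⟫ ∂ν + ∫ x, κ x * ⟪f x, g x⟫ ∂ν := by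
  simp only [add_mul]
  exact integral_add (integrable_mul_inner hσ hf hg) (integrable_mul_inner hκ hf hg)

theorem abs_integral_mul_inner_le {κ : α → ℝ} {f g : α → G} {T : ℝ} (hκ : MemLp κ ∞ ν)
    (hT : 0 ≤ T) (hκT : ∀ᵐ x ∂ν, |κ x| ≤ T) (hf : MemLp f 2 ν) (hg : MemLp g 2 ν) :
    |∫ x, κ x * ⟪f x, g x⟫ ∂ν| ≤ T * ((eLpNorm f 2 ν).toReal * (eLpNorm g 2 ν).toReal) :=
  calc |∫ x, κ x * ⟪f x, g x⟫ ∂ν| ≤ ∫ x, |κ x * ⟪f x, g x⟫| ∂ν := abs_integral_le_integral_abs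
    _ ≤ ∫ x, T * (‖f x‖ * ‖g x‖) ∂ν := by
      refine integral_mono_ae (integrable_mul_inner hκ hf hg).abs
        (((hf.norm.integrable_inner hg.norm).congr
          (Eventually.of_forall fun x => by simp [mul_comm])).const_mul T) ?_
      filter_upwards [hκT] with x hx
      rw [abs_mul]
      exact mul_le_mul hx (abs_real_inner_le_norm _ _) (abs_nonneg _) hT
    _ ≤ _ := by
      rw [integral_const_mul]
      exact mul_le_mul_of_nonneg_left (integral_norm_mul_norm_le hf hg) hT

theorem mul_eLpNorm_le_of_integral_mul_inner_self_le {τ : α → ℝ} {g : α → G} {c B : ℝ}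
    (hτ : MemLp τ ∞ ν) (hc : ∀ᵐ x ∂ν, c ≤ τ x) (hg : MemLp g 2 ν) (hB : 0 ≤ B)
    (h : ∫ x, τ x * ⟪g x, g x⟫ ∂ν ≤ B * (eLpNorm g 2 ν).toReal) :
    c * (eLpNorm g 2 ν).toReal ≤ B := by
  set N := (eLpNorm g 2 ν).toReal
  have hcoer : c * N ^ 2 ≤ ∫ x, τ x * ⟪g x, g x⟫ ∂ν := by
    rw [← integral_norm_sq_eq_eLpNorm_sq hg, ← integral_const_mul]
    refine integral_mono_ae ((hg.integrable_inner hg).congr ?_ |>.const_mul c)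
      (integrable_mul_inner hτ hg hg) ?_
    · exact Eventually.of_forall fun x => real_inner_self_eq_norm_sq (g x)
    · filter_upwards [hc] with x hx
      rw [real_inner_self_eq_norm_sq]
      exact mul_le_mul_of_nonneg_right hx (by positivity)
  rcases (show 0 ≤ N from ENNReal.toReal_nonneg).eq_or_lt with hN | hN
  · rw [← hN, mul_zero]; exact hB
  · nlinarith

theorem mul_eLpNorm_le_of_integral_mul_inner_self_eq {τ κ : α → ℝ} {f g : α → G} {c T : ℝ}
    (hτ : MemLp τ ∞ ν) (hc : ∀ᵐ x ∂ν, c ≤ τ x) (hκ : MemLp κ ∞ ν) (hT : 0 ≤ T)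
    (hκT : ∀ᵐ x ∂ν, |κ x| ≤ T) (hf : MemLp f 2 ν) (hg : MemLp g 2 ν)
    (h : ∫ x, τ x * ⟪g x, g x⟫ ∂ν = -∫ x, κ x * ⟪f x, g x⟫ ∂ν) :
    c * (eLpNorm g 2 ν).toReal ≤ T * (eLpNorm f 2 ν).toReal := by
  refine mul_eLpNorm_le_of_integral_mul_inner_self_le hτ hc hg
    (mul_nonneg hT ENNReal.toReal_nonneg) ?_
  rw [h, mul_assoc]
  exact (neg_le_abs _).trans (abs_integral_mul_inner_le hκ hT hκT hf hg)

end L2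

section Gradient

variable {E : Type*} [NormedAddCommGroup E] [InnerProductSpace ℝ E] [CompleteSpace E]

theorem norm_gradient (f : E → ℝ) (x : E) : ‖gradient f x‖ = ‖fderiv ℝ f x‖ :=
  (InnerProductSpace.toDual ℝ E).symm.norm_map _

theorem gradient_fun_sub {f g : E → ℝ} {x : E} (hf : DifferentiableAt ℝ f x)
    (hg : DifferentiableAt ℝ g x) :
    gradient (fun y => f y - g y) x = gradient f x - gradient g x := by
  simp only [gradient, fderiv_fun_sub hf hg, map_sub]

theorem ContDiff.continuous_gradient {f : E → ℝ} (hf : ContDiff ℝ 1 f) :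
    Continuous (gradient f) :=
  (InnerProductSpace.toDual ℝ E).symm.continuous.comp (hf.continuous_fderiv one_ne_zero)

theorem HasCompactSupport.gradient {f : E → ℝ} (hf : HasCompactSupport f) :
    HasCompactSupport (gradient f) :=
  (hf.fderiv ℝ).comp_left (map_zero _)

end Gradient

theorem exists_eLpNorm_le_mul_eLpNorm_gradient {Ω : Set E2} (hΩ : Bornology.IsBounded Ω) :
    ∃ C : ℝ≥0, ∀ φ : E2 → ℝ, ContDiff ℝ 1 φ → tsupport φ ⊆ Ω →
      eLpNorm φ 2 (volume.restrict Ω) ≤ C * eLpNorm (gradient φ) 2 (volume.restrict Ω) := by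
  refine ⟨eLpNormLESNormFDerivOfLeConst ℝ volume Ω 1 2 * (volume Ω ^ (2⁻¹ : ℝ)).toNNReal,
    fun φ hφ hφΩ => ?_⟩
  have hfin2 : Module.finrank ℝ E2 = 2 := finrank_euclideanSpace_fin
  have hsobolev := eLpNorm_le_eLpNorm_fderiv_of_le (volume : Measure E2) hφ
    ((subset_tsupport φ).trans hφΩ) (p := 1) (q := 2) le_rfl (by rw [hfin2]; norm_num)
    (by rw [hfin2]; norm_num) hΩ
  have hholder := eLpNorm_le_eLpNorm_mul_rpow_measure_univ (μ := volume.restrict Ω) (p := 1)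
    (q := 2) one_le_two (hφ.continuous_fderiv one_ne_zero).aestronglyMeasurable
  have hgrad : eLpNorm (fderiv ℝ φ) 2 (volume.restrict Ω) =
      eLpNorm (gradient φ) 2 (volume.restrict Ω) :=
    eLpNorm_congr_norm_ae (Eventually.of_forall fun x => (norm_gradient φ x).symm)
  rw [ENNReal.coe_mul, ENNReal.coe_toNNReal (ENNReal.rpow_lt_top_of_nonneg (by norm_num)
    hΩ.measure_lt_top.ne).ne]
  calc eLpNorm φ 2 (volume.restrict Ω) ≤ eLpNorm φ 2 volume :=
        eLpNorm_mono_measure φ Measure.restrict_le_self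
    _ ≤ _ := by simpa using hsobolev
    _ = eLpNormLESNormFDerivOfLeConst ℝ volume Ω 1 2 *
          eLpNorm (fderiv ℝ φ) 1 (volume.restrict Ω) := by
      rw [eLpNorm_restrict_eq_of_support_subset (f := fderiv ℝ φ) (μ := volume)
        ((support_fderiv_subset ℝ).trans hφΩ)]
    _ ≤ _ := by
      grw [hholder]
      rw [hgrad, Measure.restrict_apply_univ, mul_comm (eLpNorm _ _ _), ← mul_assoc]
      norm_num

section H10

variable {Ω : Set E2}

theorem memLp_and_memLp_gradient_of_contDiff {φ : E2 → ℝ} (hφ : ContDiff ℝ 1 φ)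
    (hc : HasCompactSupport φ) : MemLp φ 2 (volume.restrict Ω) ∧
      MemLp (gradient φ) 2 (volume.restrict Ω) :=
  ⟨(hφ.continuous.memLp_of_hasCompactSupport hc).restrict Ω,
    (hφ.continuous_gradient.memLp_of_hasCompactSupport hc.gradient).restrict Ω⟩

theorem MemH10.sub {u w : E2 → ℝ} {gu gw : E2 → E2} (hu : MemH10 Ω u gu)
    (hw : MemH10 Ω w gw) : MemH10 Ω (fun x => u x - w x) (fun x => gu x - gw x) := by
  obtain ⟨hu2, hgu2, φ, hφ, hφu, hφgu⟩ := hu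
  obtain ⟨hw2, hgw2, ψ, hψ, hψw, hψgw⟩ := hw
  have hφ2 n := memLp_and_memLp_gradient_of_contDiff (Ω := Ω)
    ((hφ n).1.of_le (mod_cast le_top)) (hφ n).2.1
  have hψ2 n := memLp_and_memLp_gradient_of_contDiff (Ω := Ω)
    ((hψ n).1.of_le (mod_cast le_top)) (hψ n).2.1
  refine ⟨hu2.sub hw2, hgu2.sub hgw2, fun n x => φ n x - ψ n x, fun n =>
    ⟨(hφ n).1.sub (hψ n).1, (hφ n).2.1.sub (hψ n).2.1,
      (tsupport_sub _ _).trans (Set.union_subset (hφ n).2.2 (hψ n).2.2)⟩, ?_, ?_⟩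
  · have := tendsto_integral_norm_sub_sq (fun n => (hφ2 n).1.sub hu2)
      (fun n => (hψ2 n).1.sub hw2) (by simpa [Real.norm_eq_abs, sq_abs] using hφu)
      (by simpa [Real.norm_eq_abs, sq_abs] using hψw)
    refine this.congr fun n => integral_congr_ae (Eventually.of_forall fun x => ?_)
    simp only [Pi.sub_apply, Real.norm_eq_abs, sq_abs]
    ring
  · have := tendsto_integral_norm_sub_sq (fun n => (hφ2 n).2.sub hgu2)
      (fun n => (hψ2 n).2.sub hgw2) hφgu hψgw
    refine this.congr fun n => integral_congr_ae (Eventually.of_forall fun x => ?_)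
    have hd (χ : E2 → ℝ) (hχ : ContDiff ℝ (⊤ : ℕ∞) χ) : DifferentiableAt ℝ χ x :=
      (hχ.differentiable (by simp)).differentiableAt
    simp only [Pi.sub_apply, gradient_fun_sub (hd _ (hφ n).1) (hd _ (hψ n).1)]
    congr 2
    abel

theorem exists_eLpNorm_le_mul_eLpNorm_of_memH10 (hΩ : Bornology.IsBounded Ω) :
    ∃ C : ℝ≥0, ∀ u gu, MemH10 Ω u gu →
      (eLpNorm u 2 (volume.restrict Ω)).toReal ≤
        C * (eLpNorm gu 2 (volume.restrict Ω)).toReal := by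
  obtain ⟨C, hC⟩ := exists_eLpNorm_le_mul_eLpNorm_gradient hΩ
  refine ⟨C, fun u gu ⟨hu2, hgu2, φ, hφ, hφu, hφgu⟩ => ?_⟩
  have hφ2 n := memLp_and_memLp_gradient_of_contDiff (Ω := Ω)
    ((hφ n).1.of_le (mod_cast le_top)) (hφ n).2.1
  have hφu' := tendsto_eLpNorm_of_tendsto_integral_norm_sq (fun n => (hφ2 n).1.sub hu2)
    (by simpa [Real.norm_eq_abs, sq_abs] using hφu)
  have hφgu' := tendsto_eLpNorm_of_tendsto_integral_norm_sq (fun n => (hφ2 n).2.sub hgu2) hφgu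
  have hlim : eLpNorm u 2 (volume.restrict Ω) ≤ C * eLpNorm gu 2 (volume.restrict Ω) := by
    have hbound := hφu'.add (ENNReal.Tendsto.const_mul (a := C)
      (hφgu'.add_const (eLpNorm gu 2 (volume.restrict Ω))) (.inr ENNReal.coe_ne_top))
    refine ge_of_tendsto' (by simpa using hbound) fun n => ?_
    calc eLpNorm u 2 (volume.restrict Ω) = eLpNorm (φ n - (φ n - u)) 2 (volume.restrict Ω) := by
          rw [sub_sub_cancel]
      _ ≤ eLpNorm (φ n - u) 2 (volume.restrict Ω) + eLpNorm (φ n) 2 (volume.restrict Ω) := by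
          rw [add_comm]; exact eLpNorm_sub_le (hφ2 n).1.1 ((hφ2 n).1.sub hu2).1 one_le_two
      _ ≤ eLpNorm (φ n - u) 2 (volume.restrict Ω) +
            C * eLpNorm (gradient (φ n) - gu + gu) 2 (volume.restrict Ω) := by
          rw [sub_add_cancel]
          gcongr
          exact hC _ ((hφ n).1.of_le (mod_cast le_top)) (hφ n).2.2
      _ ≤ _ := by
          gcongr; exact eLpNorm_add_le ((hφ2 n).2.sub hgu2).1 hgu2.1 one_le_two
  rw [← ENNReal.coe_toReal, ← ENNReal.toReal_mul]
  exact ENNReal.toReal_mono (ENNReal.mul_ne_top ENNReal.coe_ne_top hgu2.2.ne) hlim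

theorem exists_abs_setIntegral_le_mul_eLpNorm_of_memH10 (hΩ : Bornology.IsBounded Ω) :
    ∃ A : ℝ≥0, ∀ w gw, MemH10 Ω w gw →
      |∫ x in Ω, w x| ≤ A * (eLpNorm gw 2 (volume.restrict Ω)).toReal := by
  have : IsFiniteMeasure (volume.restrict Ω) := isFiniteMeasure_restrict.2 hΩ.measure_lt_top.ne
  obtain ⟨C, hC⟩ := exists_eLpNorm_le_mul_eLpNorm_of_memH10 hΩ
  set S := (eLpNorm (fun _ => (1 : ℝ)) 2 (volume.restrict Ω)).toReal
  refine ⟨⟨S * C, by positivity⟩, fun w gw hw => ?_⟩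
  calc |∫ x in Ω, w x| ≤ S * (eLpNorm w 2 (volume.restrict Ω)).toReal :=
        abs_integral_le_mul_eLpNorm hw.1
    _ ≤ S * (C * (eLpNorm gw 2 (volume.restrict Ω)).toReal) := by gcongr; exact hC w gw hw
    _ = _ := (mul_assoc _ _ _).symm

theorem eLpNorm_linearization_remainder_le {σ κ uσ uσκ v : E2 → ℝ} {guσ guσκ gv : E2 → E2}
    {C A : ℝ≥0} {c T : ℝ}
    (hC : ∀ w gw, MemH10 Ω w gw →
      (eLpNorm w 2 (volume.restrict Ω)).toReal ≤
        C * (eLpNorm gw 2 (volume.restrict Ω)).toReal)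
    (hA : ∀ w gw, MemH10 Ω w gw →
      |∫ x in Ω, w x| ≤ A * (eLpNorm gw 2 (volume.restrict Ω)).toReal)
    (hσ : MemLp σ ∞ (volume.restrict Ω)) (hσc : ∀ᵐ x ∂(volume.restrict Ω), c ≤ σ x)
    (hc : 0 < c)
    (hκ : MemLp κ ∞ (volume.restrict Ω)) (hT : 0 ≤ T)
    (hκT : ∀ᵐ x ∂(volume.restrict Ω), |κ x| ≤ T) (hTc : T ≤ c / 2)
    (huσ : MemH10 Ω uσ guσ) (hsolσ : ∀ w gw, MemH10 Ω w gw →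
      ∫ x in Ω, σ x * ⟪guσ x, gw x⟫ = -∫ x in Ω, w x)
    (huσκ : MemH10 Ω uσκ guσκ) (hsolσκ : ∀ w gw, MemH10 Ω w gw →
      ∫ x in Ω, (σ x + κ x) * ⟪guσκ x, gw x⟫ = -∫ x in Ω, w x)
    (hv : MemH10 Ω v gv) (hsolv : ∀ w gw, MemH10 Ω w gw →
      ∫ x in Ω, σ x * ⟪gv x, gw x⟫ = -∫ x in Ω, κ x * ⟪guσ x, gw x⟫) :
    (eLpNorm (fun x => uσκ x - uσ x - v x) 2 (volume.restrict Ω)).toReal ≤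
      2 * C * A * T ^ 2 / c ^ 3 := by
  have hr := huσκ.sub huσ
  have he := hr.sub hv
  have hσκc : ∀ᵐ x ∂(volume.restrict Ω), c / 2 ≤ σ x + κ x := by
    filter_upwards [hσc, hκT] with x hσx hκx
    linarith [neg_abs_le (κ x)]
  have hr_eq : ∀ w gw, MemH10 Ω w gw → ∫ x in Ω, σ x * ⟪guσκ x - guσ x, gw x⟫ =
      -∫ x in Ω, κ x * ⟪guσκ x, gw x⟫ := by
    intro w gw hw
    rw [integral_mul_inner_sub_left hσ huσκ.2.1 huσ.2.1 hw.2.1]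
    linarith [integral_add_mul_inner hσ hκ huσκ.2.1 hw.2.1, hsolσκ w gw hw, hsolσ w gw hw]
  have he_eq : ∫ x in Ω, σ x * ⟪guσκ x - guσ x - gv x, guσκ x - guσ x - gv x⟫ =
      -∫ x in Ω, κ x * ⟪guσκ x - guσ x, guσκ x - guσ x - gv x⟫ := by
    rw [integral_mul_inner_sub_left hσ hr.2.1 hv.2.1 he.2.1,
      integral_mul_inner_sub_left hκ huσκ.2.1 huσ.2.1 he.2.1, hr_eq _ _ he, hsolv _ _ he]
    ring
  have hU : c / 2 * (eLpNorm guσκ 2 (volume.restrict Ω)).toReal ≤ A := by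
    refine mul_eLpNorm_le_of_integral_mul_inner_self_le (τ := fun x => σ x + κ x) (hσ.add hκ)
      hσκc huσκ.2.1 A.2 ?_
    rw [hsolσκ _ _ huσκ]
    exact (neg_le_abs _).trans (hA _ _ huσκ)
  have hr_le := mul_eLpNorm_le_of_integral_mul_inner_self_eq hσ hσc hκ hT hκT huσκ.2.1 hr.2.1
    (hr_eq _ _ hr)
  have he_le :=
    mul_eLpNorm_le_of_integral_mul_inner_self_eq hσ hσc hκ hT hκT hr.2.1 he.2.1 he_eq
  have hge : c ^ 3 * (eLpNorm (fun x => guσκ x - guσ x - gv x) 2 (volume.restrict Ω)).toReal ≤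
      2 * A * T ^ 2 := by
    nlinarith [mul_le_mul_of_nonneg_left he_le (sq_nonneg c),
      mul_le_mul_of_nonneg_left hr_le (mul_nonneg hc.le hT),
      mul_le_mul_of_nonneg_left hU (sq_nonneg T)]
  rw [le_div_iff₀ (by positivity)]
  nlinarith [mul_le_mul_of_nonneg_left hge C.2,
    mul_le_mul_of_nonneg_right (hC _ _ he) (pow_pos hc 3).le]

end H10

/-- (Differentiability of the forward map with respect to the `L^∞`-norm.)
For a bounded domain `Ω ⊆ ℝ²` and `σ ∈ L^∞(Ω)` with `ess inf σ > 0`, the forward map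
`F(τ) := u^τ` satisfies `‖F(σ+κ) − F(σ) − F'(σ)κ‖_{L²(Ω)} / ‖κ‖_{L^∞(Ω)} → 0` as
`‖κ‖_{L^∞(Ω)} → 0` over directions `κ ∈ L^∞(Ω)` with `ess inf (σ+κ) > 0`, where
`F'(σ)κ := v_κ^σ` solves the linearized problem. Here this is expressed in `ε`–`δ` form. -/
theorem statement7 (Ω : Set E2) (hΩopen : IsOpen Ω) (hΩconn : IsConnected Ω)
    (hΩbdd : Bornology.IsBounded Ω)
    (σ : E2 → ℝ) (hσ : MemLp σ ⊤ (volume.restrict Ω))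
    (hσ0 : 0 < essInf σ (volume.restrict Ω))
    (uσ : E2 → ℝ) (guσ : E2 → E2) (huσ : MemH10 Ω uσ guσ)
    (hsolσ : ∀ w gw, MemH10 Ω w gw →
      (∫ x in Ω, σ x * ⟪guσ x, gw x⟫) = -∫ x in Ω, w x) :
    ∀ ε > (0 : ℝ), ∃ δ > (0 : ℝ), ∀ κ : E2 → ℝ, MemLp κ ⊤ (volume.restrict Ω) →
      essSup (fun x => |κ x|) (volume.restrict Ω) < δ →
      0 < essInf (fun x => σ x + κ x) (volume.restrict Ω) →
      ∀ (uσκ : E2 → ℝ) (guσκ : E2 → E2), MemH10 Ω uσκ guσκ →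
        (∀ w gw, MemH10 Ω w gw →
          (∫ x in Ω, (σ x + κ x) * ⟪guσκ x, gw x⟫) = -∫ x in Ω, w x) →
      ∀ (v : E2 → ℝ) (gv : E2 → E2), MemH10 Ω v gv →
        (∀ w gw, MemH10 Ω w gw →
          (∫ x in Ω, σ x * ⟪gv x, gw x⟫) = -∫ x in Ω, κ x * ⟪guσ x, gw x⟫) →
      Real.sqrt (∫ x in Ω, (uσκ x - uσ x - v x) ^ 2)
        ≤ ε * essSup (fun x => |κ x|) (volume.restrict Ω) := by
  intro ε hε
  have : (ae (volume.restrict Ω)).NeBot :=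
    ae_restrict_neBot.2 (hΩopen.measure_ne_zero volume hΩconn.nonempty)
  obtain ⟨C, hC⟩ := exists_eLpNorm_le_mul_eLpNorm_of_memH10 hΩbdd
  obtain ⟨A, hA⟩ := exists_abs_setIntegral_le_mul_eLpNorm_of_memH10 hΩbdd
  set c := essInf σ (volume.restrict Ω)
  set K := 2 * C * A / c ^ 3
  have hK : 0 ≤ K := div_nonneg (by positivity) (pow_pos hσ0 3).le
  refine ⟨min (c / 2) (ε / (K + 1)), lt_min (half_pos hσ0) (by positivity),
    fun κ hκ hκδ _ uσκ guσκ huσκ hsolσκ v gv hv hsolv => ?_⟩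
  set T := essSup (fun x => |κ x|) (volume.restrict Ω)
  have hκT := hκ.ae_abs_le_essSup_abs
  have hT : 0 ≤ T := let ⟨_, hx⟩ := hκT.exists; (abs_nonneg _).trans hx
  have hKT : K * T ≤ ε := by
    have := (lt_div_iff₀ (by positivity)).1 (hκδ.trans_le (min_le_right _ _))
    nlinarith
  rw [sqrt_integral_sq_eq_eLpNorm ((huσκ.sub huσ).sub hv).1]
  calc _ ≤ 2 * C * A * T ^ 2 / c ^ 3 :=
        eLpNorm_linearization_remainder_le hC hA hσ hσ.ae_essInf_le hσ0 hκ hT hκT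
          (hκδ.le.trans (min_le_left _ _)) huσ hsolσ huσκ hsolσκ hv hsolv
    _ = K * T * T := by ring
    _ ≤ ε * T := mul_le_mul_of_nonneg_right hKT hT
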